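/- Let f4 be the binary morphism with f4(0)=0, f4(1)=1000010011, let t be the Thue–Morse word, and let w4 = f4(t). Then the factor 011 occurs in w4 only as a suffix of an occurrence of f4(1); formally, if p·011 is a prefix of w4, then p·011 = f4(s·1) for some prefix s·1 of t. -/

import Mathlib

def tm : ℕ → Fin 2 := fun n => if (Nat.digits 2 n).sum % 2 = 0 then 0 else 1

def tmPrefix (n : ℕ) : List (Fin 2) := (List.range n).map tm

/-- The morphism `f4(0) = 0`, `f4(1) = 1000010011`. -/
def f4 : Fin 2 → List (Fin 2) :=
  fun a => if a = 0 then [0] else [1, 0, 0, 0, 0, 1, 0, 0, 1, 1]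

/-- `u` is a (finite) prefix of the Thue–Morse word. -/
def IsPrefT (u : List (Fin 2)) : Prop := u = tmPrefix u.length

/-- `p` is a (finite) prefix of `w4 = f4(t)`. -/
def IsPrefW4 (p : List (Fin 2)) : Prop := ∃ n, p <+: (tmPrefix n).flatMap f4

/-
In `f4(x)`, for any binary word `x`, a factor `11` lies either at the end of a block `f4(1)`
or across two consecutive blocks `f4(1) f4(1)`, where it is preceded by another `1`. Hence
every occurrence of `011` ends exactly at the end of a block `f4(1)`.
-/

lemma not_one_one_prefix_flatMap_f4 (l : List (Fin 2)) : ¬ [1, 1] <+: l.flatMap f4 := by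
  rcases l with _ | ⟨a, l⟩
  · simp
  · fin_cases a <;> simp [f4]

lemma eq_of_append_011_prefix_f4_one {q L : List (Fin 2)} (hq : q ++ [0, 1, 1] <+: f4 1 ++ L)
    (hlen : q.length < 10) : q = [1, 0, 0, 0, 0, 1, 0] := by
  -- the `0` after `q` still lies inside `f4 1`, so `q` is one of its ten prefixes
  have hq0 : q ++ [0] <+: f4 1 :=
    List.prefix_of_prefix_length_le (((List.prefix_append_right_inj q).2 (by simp)).trans hq)
      (List.prefix_append _ _) (by simp [f4]; omega)
  have htake : q ++ [0] = (f4 1).take q.length ++ ((f4 1)[q.length]?).toList := by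
    rw [← List.take_add_one]
    simpa using List.prefix_iff_eq_take.1 hq0
  obtain ⟨hq_eq, hlast⟩ := List.append_inj' htake
    (by rw [List.getElem?_eq_getElem (by simp [f4]; omega)]; rfl)
  obtain ⟨k, hk⟩ : ∃ k, q.length = k := ⟨_, rfl⟩
  rw [hk] at hq_eq hlast hlen
  subst hq_eq
  interval_cases k <;> simp_all [f4]

lemma exists_append_one_prefix_of_append_011_prefix_flatMap_f4 (l q : List (Fin 2))
    (hq : q ++ [0, 1, 1] <+: l.flatMap f4) :
    ∃ s, s ++ [1] <+: l ∧ q ++ [0, 1, 1] = (s ++ [1]).flatMap f4 := by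
  induction l generalizing q with
  | nil => simp at hq
  | cons a l ih =>
    rw [List.flatMap_cons] at hq
    obtain rfl | rfl : a = 0 ∨ a = 1 := by omega
    · rcases q with _ | ⟨c, q⟩
      · exact absurd (by simpa [f4] using hq) (not_one_one_prefix_flatMap_f4 l)
      · obtain ⟨rfl, hq'⟩ : c = 0 ∧ q ++ [0, 1, 1] <+: l.flatMap f4 := by simpa [f4] using hq
        obtain ⟨s, hs, heq⟩ := ih q hq'
        exact ⟨0 :: s, by simpa using hs, by simp [f4, heq]⟩
    · by_cases hlen : q.length < 10
      · obtain rfl := eq_of_append_011_prefix_f4_one hq hlen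
        exact ⟨[], by simp, by simp [f4]⟩
      · obtain ⟨q, rfl⟩ : f4 1 <+: q :=
          List.prefix_of_prefix_length_le (List.prefix_append _ _)
            ((List.prefix_append _ _).trans hq) (by simp [f4]; omega)
        rw [List.append_assoc, List.prefix_append_right_inj] at hq
        obtain ⟨s, hs, heq⟩ := ih q hq
        exact ⟨1 :: s, by simpa using hs, by simp [heq]⟩

lemma isPrefT_of_prefix_tmPrefix {u : List (Fin 2)} {n : ℕ} (h : u <+: tmPrefix n) :
    IsPrefT u := by
  have hlen : u.length ≤ n := by simpa [tmPrefix] using h.length_le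
  rw [IsPrefT, List.prefix_iff_eq_take.1 h,
    List.length_take_of_le (by simpa [tmPrefix] using hlen), tmPrefix, tmPrefix,
    ← List.map_take, List.take_range, Nat.min_eq_left hlen]

/-- The factor `011` occurs in `w4 = f4(t)` only as a suffix of an occurrence
of `f4(1)`: if `p · 011` is a prefix of `w4`, then `p · 011 = f4(s · 1)` for some
prefix `s · 1` of `t`. -/
theorem stmt16 (p : List (Fin 2)) (hp : IsPrefW4 (p ++ [0, 1, 1])) :
    ∃ s : List (Fin 2), IsPrefT (s ++ [1]) ∧ p ++ [0, 1, 1] = (s ++ [1]).flatMap f4 := by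
  obtain ⟨n, hn⟩ := hp
  obtain ⟨s, hs, heq⟩ := exists_append_one_prefix_of_append_011_prefix_flatMap_f4 _ _ hn
  exact ⟨s, isPrefT_of_prefix_tmPrefix hs, heq⟩
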